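/- For every integer k ≥ 3 there exist functions a, b, μ : ℕ → ℝ with a(n), b(n), μ(n) > 0 for all n, a(n)·μ(n) = b(n)·μ(n+1) for all n, a(0) = k and b(n) + a(n+1) = k for all n, and ∑_n μ(n) < ∞, such that λ = 0, where λ = inf{ Re ⟨Δf, f⟩ : f : ℕ → ℂ with ∑_n f(n)·μ(n) = 0 and ∑_n |f(n)|²·μ(n) = 1 }, ⟨f, g⟩ = ∑_n f(n)·conj(g(n))·μ(n), Δf(0) = f(0) − (1/k)·a(0)·f(1), and Δf(n) = f(n) − (1/k)·(b(n−1)·f(n−1) + a(n)·f(n+1)) for n ≥ 1. In other words, there exists a k-regular diagram of finite volume whose Laplace operator has 0 as the bottom of its spectrum restricted to the mean-zero subspace. -/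

import Mathlib

/-- The Laplace operator of a `k`-regular edge-indexed ray:
`Δf(0) = f(0) − (1/k)·a(0)·f(1)` and
`Δf(n+1) = f(n+1) − (1/k)·(b(n)·f(n) + a(n+1)·f(n+2))`. -/
noncomputable def rayLaplacian (k : ℕ) (a b : ℕ → ℝ) (f : ℕ → ℂ) : ℕ → ℂ
  | 0 => f 0 - (1 / (k : ℂ)) * ((a 0 : ℝ) * f 1)
  | n + 1 => f (n + 1) - (1 / (k : ℂ)) * (((b n : ℝ) : ℂ) * f n + ((a (n + 1) : ℝ) : ℂ) * f (n + 2))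

/-!
With the conductances `c(n) = a(n)μ(n)/k`, regularity says `μ(n) = c(n-1) + c(n)`, and summation
by parts turns `⟨Δf, f⟩` into the Dirichlet energy `∑ c(n)|f(n+1) - f(n)|²`. Conversely every
positive summable `c` defines a `k`-regular diagram of finite volume in this way. For
`c(n) = (n+1)⁻³` the measure `μ` has a finite first moment but an infinite second moment, so the
centred truncations `min(n, m) - t_m` have variance tending to infinity while their energy stays
below `∑ c ≤ ∑ μ`: their Rayleigh quotients tend to `0`.
-/

open ComplexConjugate Filter

structure IsRegularRay (k : ℕ) (a b μ : ℕ → ℝ) : Prop where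
  a_pos : ∀ n, 0 < a n
  b_pos : ∀ n, 0 < b n
  μ_pos : ∀ n, 0 < μ n
  compat : ∀ n, a n * μ n = b n * μ (n + 1)
  a_zero : a 0 = k
  regular : ∀ n, b n + a (n + 1) = k

/-- The conductance `a(n)μ(n)/k = b(n)μ(n+1)/k` of the edge between `n` and `n + 1`. -/
noncomputable def conductance (k : ℕ) (a μ : ℕ → ℝ) (n : ℕ) : ℝ := a n * μ n / k

lemma norm_mul_sub_mul_conj_le {c p q : ℝ} (hc : 0 ≤ c) (hp : c ≤ p) (hq : c ≤ q) (x y : ℂ) :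
    ‖(c : ℂ) * ((x - y) * conj x)‖ ≤ 2 * (‖x‖ ^ 2 * p + ‖y‖ ^ 2 * q) := by
  rw [norm_mul, norm_mul, Complex.norm_real, Real.norm_eq_abs, abs_of_nonneg hc, Complex.norm_conj]
  have hxy : ‖x - y‖ * ‖x‖ ≤ 2 * ‖x‖ ^ 2 + ‖y‖ ^ 2 := by
    nlinarith [norm_sub_le x y, norm_nonneg x, norm_nonneg y, sq_nonneg (‖x‖ - ‖y‖)]
  nlinarith [mul_le_mul_of_nonneg_left hxy hc, sq_nonneg ‖x‖, sq_nonneg ‖y‖]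

lemma summable_mul_of_abs_le {μ g : ℕ → ℝ} (hμ0 : ∀ n, 0 ≤ μ n) (hμ : Summable μ) {B : ℝ}
    (hg : ∀ n, |g n| ≤ B) : Summable fun n => g n * μ n :=
  (hμ.mul_left B).of_norm_bounded fun n => by
    rw [norm_mul, Real.norm_eq_abs, Real.norm_eq_abs, abs_of_nonneg (hμ0 n)]
    exact mul_le_mul_of_nonneg_right (hg n) (hμ0 n)

lemma summable_sq_mul_of_abs_le {μ g : ℕ → ℝ} (hμ0 : ∀ n, 0 ≤ μ n) (hμ : Summable μ) {B : ℝ}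
    (hg : ∀ n, |g n| ≤ B) : Summable fun n => g n ^ 2 * μ n :=
  summable_mul_of_abs_le hμ0 hμ fun n => by
    rw [abs_pow]
    exact pow_le_pow_left₀ (abs_nonneg _) (hg n) 2

/-- For `n < m` the summand is at least `(n² - 2Tn) μ(n)`, and the first moment is finite. -/
lemma tendsto_tsum_sq_min_sub_mul {μ : ℕ → ℝ} (hμ0 : ∀ n, 0 ≤ μ n) (hμ : Summable μ)
    (h1 : Summable fun n : ℕ => (n : ℝ) * μ n) (h2 : ¬Summable fun n : ℕ => (n : ℝ) ^ 2 * μ n)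
    {t : ℕ → ℝ} {T : ℝ} (ht0 : ∀ m, 0 ≤ t m) (htT : ∀ m, t m ≤ T) :
    Tendsto (fun m : ℕ => ∑' n : ℕ, (min (n : ℝ) m - t m) ^ 2 * μ n) atTop atTop := by
  have hpartial : Tendsto (fun m => ∑ n ∈ Finset.range m, (n : ℝ) ^ 2 * μ n) atTop atTop :=
    (not_summable_iff_tendsto_nat_atTop_of_nonneg fun n => mul_nonneg (sq_nonneg _) (hμ0 n)).1 h2
  refine tendsto_atTop_mono (fun m => ?_)
    (tendsto_atTop_add_const_right _ (-(2 * T * ∑' n : ℕ, (n : ℝ) * μ n)) hpartial)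
  have hbound (n : ℕ) : |min (n : ℝ) m - t m| ≤ m + T := by
    rw [abs_le]
    constructor <;> nlinarith [min_le_right (n : ℝ) m, le_min (Nat.cast_nonneg n : (0 : ℝ) ≤ n)
      (Nat.cast_nonneg m), ht0 m, htT m]
  calc ∑ n ∈ Finset.range m, (n : ℝ) ^ 2 * μ n + -(2 * T * ∑' n : ℕ, (n : ℝ) * μ n)
      ≤ ∑ n ∈ Finset.range m, ((n : ℝ) ^ 2 * μ n - 2 * T * ((n : ℝ) * μ n)) := by
        rw [Finset.sum_sub_distrib, ← Finset.mul_sum, sub_eq_add_neg]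
        gcongr
        · linarith [ht0 0, htT 0]
        · exact h1.sum_le_tsum _ fun n _ => mul_nonneg n.cast_nonneg (hμ0 n)
    _ ≤ ∑ n ∈ Finset.range m, (min (n : ℝ) m - t m) ^ 2 * μ n := by
        refine Finset.sum_le_sum fun n hn => ?_
        rw [min_eq_left (by exact_mod_cast (Finset.mem_range.1 hn).le)]
        nlinarith [mul_nonneg (sq_nonneg (t m)) (hμ0 n),
          mul_nonneg (mul_nonneg n.cast_nonneg (hμ0 n)) (sub_nonneg.2 (htT m))]
    _ ≤ ∑' n : ℕ, (min (n : ℝ) m - t m) ^ 2 * μ n :=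
        (summable_sq_mul_of_abs_le hμ0 hμ hbound).sum_le_tsum _
          fun n _ => mul_nonneg (sq_nonneg _) (hμ0 n)

def meanZeroRayleighValues (k : ℕ) (a b μ : ℕ → ℝ) : Set ℝ :=
  { r : ℝ | ∃ f : ℕ → ℂ,
      (∑' n, f n * ((μ n : ℝ) : ℂ)) = 0 ∧
      (∑' n, ‖f n‖ ^ 2 * μ n) = 1 ∧
      r = (∑' n, rayLaplacian k a b f n * (starRingEnd ℂ) (f n) * ((μ n : ℝ) : ℂ)).re }

namespace IsRegularRay

variable {k : ℕ} {a b μ : ℕ → ℝ} (h : IsRegularRay k a b μ)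
include h

lemma k_pos : (0 : ℝ) < k := h.a_zero ▸ h.a_pos 0

lemma conductance_pos (n : ℕ) : 0 < conductance k a μ n :=
  div_pos (mul_pos (h.a_pos n) (h.μ_pos n)) h.k_pos

lemma conductance_eq (n : ℕ) : conductance k a μ n = b n * μ (n + 1) / k := by
  rw [conductance, h.compat]

lemma conductance_zero : conductance k a μ 0 = μ 0 := by
  rw [conductance, h.a_zero, mul_div_cancel_left₀ _ h.k_pos.ne']

lemma conductance_le (n : ℕ) : conductance k a μ n ≤ μ n := by
  rw [conductance, div_le_iff₀ h.k_pos, mul_comm]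
  refine mul_le_mul_of_nonneg_left ?_ (h.μ_pos n).le
  cases n with
  | zero => exact h.a_zero.le
  | succ n => linarith [h.regular n, h.b_pos n]

lemma conductance_le_succ (n : ℕ) : conductance k a μ n ≤ μ (n + 1) := by
  rw [h.conductance_eq, div_le_iff₀ h.k_pos, mul_comm]
  exact mul_le_mul_of_nonneg_left (by linarith [h.regular n, h.a_pos (n + 1)]) (h.μ_pos _).le

lemma laplacian_zero_mul (f : ℕ → ℂ) :
    rayLaplacian k a b f 0 * μ 0 = conductance k a μ 0 * (f 0 - f 1) := by
  have hk : (k : ℂ) ≠ 0 := by exact_mod_cast h.k_pos.ne'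
  simp only [rayLaplacian, h.conductance_zero, h.a_zero]
  push_cast
  field_simp

lemma laplacian_succ_mul (f : ℕ → ℂ) (n : ℕ) :
    rayLaplacian k a b f (n + 1) * μ (n + 1) =
      conductance k a μ n * (f (n + 1) - f n) +
        conductance k a μ (n + 1) * (f (n + 1) - f (n + 2)) := by
  have hk : (k : ℂ) ≠ 0 := by exact_mod_cast h.k_pos.ne'
  have hreg : (b n : ℂ) + a (n + 1) = k := by exact_mod_cast h.regular n
  rw [h.conductance_eq n, conductance]
  simp only [rayLaplacian]
  push_cast
  field_simp
  linear_combination (-(f (n + 1) * μ (n + 1))) * hreg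

theorem hasSum_laplacian_mul_conj {f : ℕ → ℂ} (hf : Summable fun n => ‖f n‖ ^ 2 * μ n) :
    HasSum (fun n => rayLaplacian k a b f n * conj (f n) * μ n)
      ((∑' n, conductance k a μ n * ‖f (n + 1) - f n‖ ^ 2 : ℝ) : ℂ) := by
  let c := conductance k a μ
  -- `μ Δf` at `n + 1` is the current `u (n + 1)` towards `n + 2` plus the current `w n` towards `n`
  let u : ℕ → ℂ := fun n => c n * ((f n - f (n + 1)) * conj (f n))
  let w : ℕ → ℂ := fun n => c n * ((f (n + 1) - f n) * conj (f (n + 1)))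
  have hbound : Summable fun n => 2 * (‖f n‖ ^ 2 * μ n + ‖f (n + 1)‖ ^ 2 * μ (n + 1)) :=
    (hf.add ((summable_nat_add_iff 1).2 hf)).mul_left 2
  have hu : Summable u := hbound.of_norm_bounded fun n =>
    norm_mul_sub_mul_conj_le (h.conductance_pos n).le (h.conductance_le n)
      (h.conductance_le_succ n) _ _
  have hw : Summable w := hbound.of_norm_bounded fun n => by
    rw [add_comm]
    exact norm_mul_sub_mul_conj_le (h.conductance_pos n).le (h.conductance_le_succ n)
      (h.conductance_le n) _ _
  have huw (n : ℕ) : u n + w n = ((c n * ‖f (n + 1) - f n‖ ^ 2 : ℝ) : ℂ) := by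
    simp only [u, w]
    rw [Complex.ofReal_mul, Complex.ofReal_pow, ← Complex.mul_conj', map_sub]
    ring
  have hterm (n : ℕ) :
      rayLaplacian k a b f (n + 1) * conj (f (n + 1)) * μ (n + 1) = u (n + 1) + w n := by
    simp only [u, w]
    rw [mul_right_comm, h.laplacian_succ_mul]
    ring
  have h0 : rayLaplacian k a b f 0 * conj (f 0) * μ 0 = u 0 := by
    simp only [u]
    rw [mul_right_comm, h.laplacian_zero_mul]
    ring
  have hval : u 0 + (∑' n, u n - u 0 + ∑' n, w n) =
      ((∑' n, c n * ‖f (n + 1) - f n‖ ^ 2 : ℝ) : ℂ) := by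
    rw [Complex.ofReal_tsum, ← tsum_congr huw, hu.tsum_add hw]
    ring
  have hsucc : HasSum (fun n => rayLaplacian k a b f (n + 1) * conj (f (n + 1)) * μ (n + 1))
      (∑' n, u n - u 0 + ∑' n, w n) := by
    refine HasSum.congr_fun ?_ hterm
    simpa using ((hasSum_nat_add_iff' 1).2 hu.hasSum).add hw.hasSum
  have hsum := HasSum.zero_add (f := fun n => rayLaplacian k a b f n * conj (f n) * μ n) hsucc
  rwa [h0, hval] at hsum

lemma re_tsum_laplacian_mul_conj {f : ℕ → ℂ} (hf : Summable fun n => ‖f n‖ ^ 2 * μ n) :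
    (∑' n, rayLaplacian k a b f n * conj (f n) * μ n).re =
      ∑' n, conductance k a μ n * ‖f (n + 1) - f n‖ ^ 2 := by
  rw [(h.hasSum_laplacian_mul_conj hf).tsum_eq, Complex.ofReal_re]

lemma nonneg_of_mem_meanZeroRayleighValues {r : ℝ} (hr : r ∈ meanZeroRayleighValues k a b μ) :
    0 ≤ r := by
  obtain ⟨f, -, hnorm, rfl⟩ := hr
  have hf : Summable fun n => ‖f n‖ ^ 2 * μ n :=
    by_contra fun hf => by simp [tsum_eq_zero_of_not_summable hf] at hnorm
  rw [h.re_tsum_laplacian_mul_conj hf]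
  exact tsum_nonneg fun n => mul_nonneg (h.conductance_pos n).le (sq_nonneg _)

lemma div_mem_meanZeroRayleighValues (hμ : Summable μ) {g : ℕ → ℝ} {B : ℝ}
    (hg : ∀ n, |g n| ≤ B) (hmean : ∑' n, g n * μ n = 0) (hs : 0 < ∑' n, g n ^ 2 * μ n) :
    (∑' n, conductance k a μ n * (g (n + 1) - g n) ^ 2) / ∑' n, g n ^ 2 * μ n ∈
      meanZeroRayleighValues k a b μ := by
  set s := ∑' n, g n ^ 2 * μ n
  have hnorm (x : ℝ) : ‖((x / √s : ℝ) : ℂ)‖ ^ 2 = x ^ 2 / s := by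
    rw [Complex.norm_real, Real.norm_eq_abs, sq_abs, div_pow, Real.sq_sqrt hs.le]
  have hsq : Summable fun n => g n ^ 2 * μ n :=
    summable_sq_mul_of_abs_le (fun n => (h.μ_pos n).le) hμ hg
  refine ⟨fun n => ((g n / √s : ℝ) : ℂ), ?_, ?_, ?_⟩
  · simp_rw [← Complex.ofReal_mul, ← Complex.ofReal_tsum, div_mul_eq_mul_div, tsum_div_const,
      hmean, zero_div, Complex.ofReal_zero]
  · simp_rw [hnorm, div_mul_eq_mul_div, tsum_div_const]
    exact div_self hs.ne'
  · have hf : Summable fun n => ‖((g n / √s : ℝ) : ℂ)‖ ^ 2 * μ n := by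
      simp_rw [hnorm, div_mul_eq_mul_div]
      exact hsq.div_const s
    rw [h.re_tsum_laplacian_mul_conj hf, ← tsum_div_const]
    refine tsum_congr fun n => ?_
    rw [← Complex.ofReal_sub, ← sub_div, hnorm, mul_div_assoc]

lemma exists_mem_meanZeroRayleighValues_lt (hμ : Summable μ)
    (h1 : Summable fun n : ℕ => (n : ℝ) * μ n) (h2 : ¬Summable fun n : ℕ => (n : ℝ) ^ 2 * μ n)
    {ε : ℝ} (hε : 0 < ε) : ∃ r ∈ meanZeroRayleighValues k a b μ, r < ε := by
  have hμ0 (n : ℕ) : 0 ≤ μ n := (h.μ_pos n).le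
  set V := ∑' n, μ n
  have hV : 0 < V := hμ.tsum_pos hμ0 0 (h.μ_pos 0)
  set M := ∑' n : ℕ, (n : ℝ) * μ n
  have hF0 (m n : ℕ) : 0 ≤ min (n : ℝ) m := le_min n.cast_nonneg m.cast_nonneg
  have hFsum (m : ℕ) : Summable fun n : ℕ => min (n : ℝ) m * μ n :=
    summable_mul_of_abs_le hμ0 hμ fun n => by rw [abs_of_nonneg (hF0 m n)]; exact min_le_right _ _
  set t : ℕ → ℝ := fun m => (∑' n : ℕ, min (n : ℝ) m * μ n) / V
  have ht0 (m : ℕ) : 0 ≤ t m := div_nonneg (tsum_nonneg fun n => mul_nonneg (hF0 m n) (hμ0 n)) hV.le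
  have htM (m : ℕ) : t m ≤ M / V := div_le_div_of_nonneg_right
    ((hFsum m).tsum_le_tsum (fun n => mul_le_mul_of_nonneg_right (min_le_left _ _) (hμ0 n)) h1)
    hV.le
  obtain ⟨m, hm⟩ := ((tendsto_tsum_sq_min_sub_mul hμ0 hμ h1 h2 ht0 htM).eventually_gt_atTop
    (V / ε)).exists
  set g : ℕ → ℝ := fun n => min (n : ℝ) m - t m
  have hbound (n : ℕ) : |g n| ≤ m + M / V := by
    rw [abs_le]
    constructor <;> linarith [min_le_right (n : ℝ) m, hF0 m n, ht0 m, htM m]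
  have hmean : ∑' n, g n * μ n = 0 := by
    simp_rw [g, sub_mul]
    rw [(hFsum m).tsum_sub (hμ.mul_left (t m)), tsum_mul_left, div_mul_cancel₀ _ hV.ne', sub_self]
  have hs : 0 < ∑' n, g n ^ 2 * μ n := (div_pos hV hε).trans hm
  have hstep (n : ℕ) : conductance k a μ n * (g (n + 1) - g n) ^ 2 ≤ μ n := by
    have hinc : |g (n + 1) - g n| ≤ 1 := by
      simpa [g] using abs_min_sub_min_le_max ((n : ℝ) + 1) (m : ℝ) n m
    calc conductance k a μ n * (g (n + 1) - g n) ^ 2 ≤ conductance k a μ n * 1 :=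
          mul_le_mul_of_nonneg_left ((sq_le_one_iff_abs_le_one _).2 hinc) (h.conductance_pos n).le
      _ ≤ μ n := by rw [mul_one]; exact h.conductance_le n
  have henergy : ∑' n, conductance k a μ n * (g (n + 1) - g n) ^ 2 ≤ V :=
    (hμ.of_nonneg_of_le (fun n => mul_nonneg (h.conductance_pos n).le (sq_nonneg _))
      hstep).tsum_le_tsum hstep hμ
  refine ⟨_, h.div_mem_meanZeroRayleighValues hμ hbound hmean hs, ?_⟩
  calc (∑' n, conductance k a μ n * (g (n + 1) - g n) ^ 2) / ∑' n, g n ^ 2 * μ n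
      ≤ V / ∑' n, g n ^ 2 * μ n := div_le_div_of_nonneg_right henergy hs.le
    _ < ε := by rwa [div_lt_iff₀ hs, mul_comm, ← div_lt_iff₀ hε]

theorem sInf_meanZeroRayleighValues_eq_zero (hμ : Summable μ)
    (h1 : Summable fun n : ℕ => (n : ℝ) * μ n) (h2 : ¬Summable fun n : ℕ => (n : ℝ) ^ 2 * μ n) :
    sInf (meanZeroRayleighValues k a b μ) = 0 := by
  obtain ⟨r, hr, -⟩ := h.exists_mem_meanZeroRayleighValues_lt hμ h1 h2 one_pos
  exact csInf_eq_of_forall_ge_of_forall_gt_exists_lt ⟨r, hr⟩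
    (fun _ => h.nonneg_of_mem_meanZeroRayleighValues)
    (fun _ => h.exists_mem_meanZeroRayleighValues_lt hμ h1 h2)

end IsRegularRay

section Construction

variable {c : ℕ → ℝ}

def rayMeasure (c : ℕ → ℝ) : ℕ → ℝ
  | 0 => c 0
  | n + 1 => c n + c (n + 1)

noncomputable def rayForwardIndex (k : ℕ) (c : ℕ → ℝ) (n : ℕ) : ℝ := k * c n / rayMeasure c n

noncomputable def rayBackwardIndex (k : ℕ) (c : ℕ → ℝ) (n : ℕ) : ℝ :=
  k * c n / rayMeasure c (n + 1)

lemma rayMeasure_pos (hc : ∀ n, 0 < c n) (n : ℕ) : 0 < rayMeasure c n := by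
  cases n with
  | zero => exact hc 0
  | succ n => exact add_pos (hc n) (hc (n + 1))

lemma isRegularRay_of_conductance {k : ℕ} (hk : 0 < k) (hc : ∀ n, 0 < c n) :
    IsRegularRay k (rayForwardIndex k c) (rayBackwardIndex k c) (rayMeasure c) where
  a_pos n := div_pos (mul_pos (by exact_mod_cast hk) (hc n)) (rayMeasure_pos hc n)
  b_pos n := div_pos (mul_pos (by exact_mod_cast hk) (hc n)) (rayMeasure_pos hc (n + 1))
  μ_pos := rayMeasure_pos hc
  compat n := by
    rw [rayForwardIndex, rayBackwardIndex, div_mul_cancel₀ _ (rayMeasure_pos hc n).ne',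
      div_mul_cancel₀ _ (rayMeasure_pos hc (n + 1)).ne']
  a_zero := mul_div_cancel_right₀ _ (hc 0).ne'
  regular n := by
    rw [rayForwardIndex, rayBackwardIndex, ← add_div, ← mul_add]
    exact mul_div_cancel_right₀ _ (rayMeasure_pos hc (n + 1)).ne'

lemma summable_rayMeasure (hc : Summable c) : Summable (rayMeasure c) :=
  (summable_nat_add_iff 1).1 (hc.add ((summable_nat_add_iff 1).2 hc))

lemma summable_mul_rayMeasure (hc0 : ∀ n, 0 ≤ c n)
    (hc : Summable fun n : ℕ => ((n : ℝ) + 1) * c n) :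
    Summable fun n : ℕ => (n : ℝ) * rayMeasure c n := by
  refine (summable_nat_add_iff 1).1 <|
    (hc.add ((summable_nat_add_iff 1).2 hc)).of_nonneg_of_le (fun n => ?_) (fun n => ?_)
  · exact mul_nonneg (Nat.cast_nonneg _) (add_nonneg (hc0 n) (hc0 (n + 1)))
  · simp only [rayMeasure]
    push_cast
    nlinarith [hc0 (n + 1)]

lemma not_summable_sq_mul_rayMeasure (hc0 : ∀ n, 0 ≤ c n)
    (hc : ¬Summable fun n : ℕ => ((n : ℝ) + 1) ^ 2 * c n) :
    ¬Summable fun n : ℕ => (n : ℝ) ^ 2 * rayMeasure c n := fun hs => hc <|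
  ((summable_nat_add_iff 1).2 hs).of_nonneg_of_le (fun n => mul_nonneg (sq_nonneg _) (hc0 n))
    fun n => by
      simp only [rayMeasure]
      push_cast
      nlinarith [hc0 (n + 1), sq_nonneg ((n : ℝ) + 1)]

end Construction

lemma summable_one_div_add_one_pow {p : ℕ} :
    (Summable fun n : ℕ => 1 / ((n : ℝ) + 1) ^ p) ↔ 1 < p := by
  exact_mod_cast (summable_nat_add_iff 1 (f := fun n : ℕ => 1 / (n : ℝ) ^ p)).trans
    Real.summable_one_div_nat_pow

theorem stmt6 (k : ℕ) (hk : 3 ≤ k) :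
    ∃ a b μ : ℕ → ℝ,
      (∀ n, 0 < a n) ∧ (∀ n, 0 < b n) ∧ (∀ n, 0 < μ n) ∧
      (∀ n, a n * μ n = b n * μ (n + 1)) ∧
      a 0 = k ∧ (∀ n, b n + a (n + 1) = k) ∧
      Summable μ ∧
      sInf { r : ℝ | ∃ f : ℕ → ℂ,
          (∑' n, f n * ((μ n : ℝ) : ℂ)) = 0 ∧
          (∑' n, ‖f n‖ ^ 2 * μ n) = 1 ∧
          r = (∑' n, rayLaplacian k a b f n * (starRingEnd ℂ) (f n) * ((μ n : ℝ) : ℂ)).re } = 0 := by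
  set c : ℕ → ℝ := fun n => 1 / ((n : ℝ) + 1) ^ 3
  have hc0 (n : ℕ) : 0 ≤ c n := by positivity
  have hc : Summable c := summable_one_div_add_one_pow.2 (by norm_num)
  have hc1 : Summable fun n : ℕ => ((n : ℝ) + 1) * c n :=
    (summable_one_div_add_one_pow.2 one_lt_two).congr fun n => by
      simp only [c]
      field_simp
  have hc2 : ¬Summable fun n : ℕ => ((n : ℝ) + 1) ^ 2 * c n := fun hs =>
    (lt_irrefl 1) <| summable_one_div_add_one_pow.1 <| hs.congr fun n => by
      simp only [c]
      field_simp
  have h := isRegularRay_of_conductance (k := k) (by omega) fun n => (by positivity : 0 < c n)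
  have hμ := summable_rayMeasure hc
  exact ⟨_, _, _, h.a_pos, h.b_pos, h.μ_pos, h.compat, h.a_zero, h.regular, hμ,
    h.sInf_meanZeroRayleighValues_eq_zero hμ (summable_mul_rayMeasure hc0 hc1)
      (not_summable_sq_mul_rayMeasure hc0 hc2)⟩
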